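/- arXiv:2211.04671 — 2 statements merged into one kernel-verified Lean document; each statement's English description precedes it below -/
import Mathlib

section
/- Let ξ, η ∈ L¹(𝒫) and F(λ) := Ê[ξ + λη]. Then the right derivative of F at λ = 0 exists and F'₊(0) = sup_{P∈𝒫_{ξ}} ∫_Ω η dP = Ê_{ξ}[η], and this supremum is attained, i.e., F'₊(0) = max_{P∈𝒫_{ξ}} ∫_Ω η dP. -/
open MeasureTheory Filter Topology Set

noncomputable section

variable {Ω : Type*} [MeasurableSpace Ω] [TopologicalSpace Ω]

/-- `ξ : Ω → ℝ` belongs to `L¹(𝒮)`: it is Borel measurable, integrable w.r.t. every `P ∈ 𝒮`,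
and can be approximated uniformly over `𝒮` in `L¹`-norm by bounded continuous functions. -/
def MemL1 (𝒮 : Set (ProbabilityMeasure Ω)) (ξ : Ω → ℝ) : Prop :=
  Measurable ξ ∧ (∀ P ∈ 𝒮, Integrable ξ (P : Measure Ω)) ∧
    ∀ δ : ℝ, 0 < δ → ∃ θ : BoundedContinuousFunction Ω ℝ,
      ∀ P ∈ 𝒮, ∫ ω, |ξ ω - θ ω| ∂(P : Measure Ω) ≤ δ

/-- The sublinear expectation `Ê[ξ] = sup_{P ∈ 𝒮} E_P[ξ]`. -/
def sublinE (𝒮 : Set (ProbabilityMeasure Ω)) (ξ : Ω → ℝ) : ℝ :=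
  ⨆ P : 𝒮, ∫ ω, ξ ω ∂((P : ProbabilityMeasure Ω) : Measure Ω)

/-- The set of maximizers `𝒫_{ξ} = {P ∈ 𝒮 : E_P[ξ] = Ê[ξ]}`. -/
def maximizers (𝒮 : Set (ProbabilityMeasure Ω)) (ξ : Ω → ℝ) : Set (ProbabilityMeasure Ω) :=
  {P ∈ 𝒮 | ∫ ω, ξ ω ∂(P : Measure Ω) = sublinE 𝒮 ξ}

/-- `Ê_{ξ}[η] = sup_{P ∈ 𝒫_{ξ}} E_P[η]`. -/
def sublinECond (𝒮 : Set (ProbabilityMeasure Ω)) (ξ η : Ω → ℝ) : ℝ :=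
  ⨆ P : maximizers 𝒮 ξ, ∫ ω, η ω ∂((P : ProbabilityMeasure Ω) : Measure Ω)

lemma contOn_integral [OpensMeasurableSpace Ω] (𝒮 : Set (ProbabilityMeasure Ω)) (ξ : Ω → ℝ)
    (hξ : MemL1 𝒮 ξ) :
    ContinuousOn (fun P : ProbabilityMeasure Ω => ∫ ω, ξ ω ∂(P : Measure Ω)) 𝒮 := by
  obtain ⟨hm, hi, ha⟩ := hξ
  choose θ hθ using fun n : ℕ => ha (1/(n+1)) (by positivity)
  have hunif : TendstoUniformlyOn
      (fun (n : ℕ) (P : ProbabilityMeasure Ω) => ∫ ω, (θ n) ω ∂(P : Measure Ω))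
      (fun P : ProbabilityMeasure Ω => ∫ ω, ξ ω ∂(P : Measure Ω)) atTop 𝒮 := by
    rw [Metric.tendstoUniformlyOn_iff]
    intro ε hε
    obtain ⟨N, hN⟩ := exists_nat_one_div_lt hε
    filter_upwards [eventually_ge_atTop N] with n hn P hP
    have h1 : (1:ℝ)/(n+1) ≤ 1/(N+1) := by
      apply one_div_le_one_div_of_le (by positivity)
      have : (N:ℝ) ≤ (n:ℝ) := Nat.cast_le.2 hn
      linarith
    have hint : Integrable (fun ω => (θ n) ω) (P : Measure Ω) :=
      (θ n).integrable _
    have hsub : ∫ ω, ξ ω ∂(P : Measure Ω) - ∫ ω, (θ n) ω ∂(P : Measure Ω)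
        = ∫ ω, (ξ ω - (θ n) ω) ∂(P : Measure Ω) := (integral_sub (hi P hP) hint).symm
    rw [Real.dist_eq, hsub]
    calc |∫ ω, (ξ ω - (θ n) ω) ∂(P : Measure Ω)|
        ≤ ∫ ω, |ξ ω - (θ n) ω| ∂(P : Measure Ω) := by
          simpa [Real.norm_eq_abs] using
            norm_integral_le_integral_norm (μ := (P : Measure Ω)) (fun ω => ξ ω - (θ n) ω)
      _ ≤ 1/(n+1) := hθ n P hP
      _ ≤ 1/(N+1) := h1
      _ < ε := hN
  exact hunif.continuousOn (Frequently.of_forall fun n =>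
    (ProbabilityMeasure.continuous_integral_boundedContinuousFunction (θ n)).continuousOn)

lemma ciSup_eq_of_isMaxOn {X : Type*} {s : Set X} {g : X → ℝ} {x₀ : X}
    (hx₀ : x₀ ∈ s) (hmax : IsMaxOn g s x₀) : (⨆ x : s, g x) = g x₀ := by
  haveI : Nonempty s := ⟨⟨x₀, hx₀⟩⟩
  apply le_antisymm
  · exact ciSup_le fun x => hmax x.2
  · exact le_ciSup ⟨g x₀, forall_mem_range.2 fun x => hmax x.2⟩ (⟨x₀, hx₀⟩ : s)

/-- the right derivative of `F(λ) = Ê[ξ + λη]` at `λ = 0` exists and equals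
`Ê_{ξ}[η] = sup_{P ∈ 𝒫_{ξ}} E_P[η]`, and this supremum is attained. -/
theorem stmt_6 {Ω : Type*} [MeasurableSpace Ω] [TopologicalSpace Ω] [PolishSpace Ω] [BorelSpace Ω]
    (𝒮 : Set (ProbabilityMeasure Ω)) (h𝒮ne : 𝒮.Nonempty) (h𝒮c : IsCompact 𝒮)
    (ξ η : Ω → ℝ) (hξ : MemL1 𝒮 ξ) (hη : MemL1 𝒮 η) :
    Tendsto
      (fun lam : ℝ => (sublinE 𝒮 (fun ω => ξ ω + lam * η ω) - sublinE 𝒮 ξ) / lam)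
      (𝓝[>] 0) (𝓝 (sublinECond 𝒮 ξ η)) ∧
    ∃ P ∈ maximizers 𝒮 ξ, ∫ ω, η ω ∂(P : Measure Ω) = sublinECond 𝒮 ξ η := by
  classical
  set fξ : ProbabilityMeasure Ω → ℝ := fun P => ∫ ω, ξ ω ∂(P : Measure Ω) with hfξ
  set fη : ProbabilityMeasure Ω → ℝ := fun P => ∫ ω, η ω ∂(P : Measure Ω) with hfη
  have hcξ : ContinuousOn fξ 𝒮 := contOn_integral 𝒮 ξ hξ
  have hcη : ContinuousOn fη 𝒮 := contOn_integral 𝒮 η hη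
  obtain ⟨hξm, hξi, -⟩ := hξ
  obtain ⟨hηm, hηi, -⟩ := hη
  -- integral of ξ + lam·η splits
  have hsplit : ∀ (lam : ℝ), ∀ P ∈ 𝒮,
      ∫ ω, (ξ ω + lam * η ω) ∂(P : Measure Ω) = fξ P + lam * fη P := by
    intro lam P hP
    rw [integral_add (hξi P hP) ((hηi P hP).const_mul lam), integral_const_mul]
  -- maximizer of fξ + lam·fη for each lam, computing sublinE
  have key : ∀ lam : ℝ, ∃ P ∈ 𝒮, (∀ Q ∈ 𝒮, fξ Q + lam * fη Q ≤ fξ P + lam * fη P) ∧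
      sublinE 𝒮 (fun ω => ξ ω + lam * η ω) = fξ P + lam * fη P := by
    intro lam
    have hcont : ContinuousOn (fun P => fξ P + lam * fη P) 𝒮 :=
      hcξ.add (continuousOn_const.mul hcη)
    obtain ⟨P, hPS, hPmax⟩ := h𝒮c.exists_isMaxOn h𝒮ne hcont
    refine ⟨P, hPS, fun Q hQ => hPmax hQ, ?_⟩
    have : sublinE 𝒮 (fun ω => ξ ω + lam * η ω) = ⨆ Q : 𝒮, (fξ ↑Q + lam * fη ↑Q) := by
      exact iSup_congr fun Q => hsplit lam ↑Q Q.2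
    rw [this]
    exact ciSup_eq_of_isMaxOn hPS hPmax
  -- maximizer of fξ
  obtain ⟨P₀, hP₀S, hP₀max⟩ := h𝒮c.exists_isMaxOn h𝒮ne hcξ
  have hF0 : sublinE 𝒮 ξ = fξ P₀ := ciSup_eq_of_isMaxOn hP₀S hP₀max
  have hmemM : ∀ P, P ∈ maximizers 𝒮 ξ ↔ P ∈ 𝒮 ∧ fξ P = sublinE 𝒮 ξ := fun P => Iff.rfl
  have hMsub : maximizers 𝒮 ξ ⊆ 𝒮 := fun P hP => hP.1
  have hP₀M : P₀ ∈ maximizers 𝒮 ξ := ⟨hP₀S, hF0.symm⟩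
  -- maximizers is compact
  have hMc : IsCompact (maximizers 𝒮 ξ) := by
    haveI : CompactSpace ↥𝒮 := isCompact_iff_compactSpace.mp h𝒮c
    have hclosed : IsClosed {x : ↥𝒮 | fξ ↑x = sublinE 𝒮 ξ} :=
      isClosed_eq (hcξ.restrict) continuous_const
    have : maximizers 𝒮 ξ = Subtype.val '' {x : ↥𝒮 | fξ ↑x = sublinE 𝒮 ξ} := by
      ext P
      constructor
      · rintro ⟨hPS, hPv⟩; exact ⟨⟨P, hPS⟩, hPv, rfl⟩
      · rintro ⟨⟨Q, hQS⟩, hQv, rfl⟩; exact ⟨hQS, hQv⟩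
    rw [this]
    exact (hclosed.isCompact).image continuous_subtype_val
  -- maximizer of fη over maximizers
  obtain ⟨Ps, hPsM, hPsmax⟩ := hMc.exists_isMaxOn ⟨P₀, hP₀M⟩ (hcη.mono hMsub)
  have hc : sublinECond 𝒮 ξ η = fη Ps := ciSup_eq_of_isMaxOn hPsM hPsmax
  set c := sublinECond 𝒮 ξ η with hcdef
  refine ⟨?_, Ps, hPsM, hc.symm⟩
  -- uniform bound on fη over 𝒮
  obtain ⟨C, hC⟩ := h𝒮c.exists_bound_of_continuousOn hcη
  simp only [Real.norm_eq_abs] at hC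
  choose Q hQS hQmax hQval using key
  set G : ℝ → ℝ :=
    fun lam => (sublinE 𝒮 (fun ω => ξ ω + lam * η ω) - sublinE 𝒮 ξ) / lam with hGdef
  -- lower bound
  have hlow : ∀ lam : ℝ, 0 < lam → c ≤ G lam := by
    intro lam hlam
    have h1 : fξ Ps + lam * fη Ps ≤ fξ (Q lam) + lam * fη (Q lam) :=
      hQmax lam Ps (hMsub hPsM)
    have h2 : fξ Ps = sublinE 𝒮 ξ := hPsM.2
    rw [hGdef]
    rw [le_div_iff₀ hlam]
    have := hQval lam
    rw [hc]
    nlinarith [hQval lam]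
  -- eventual upper bound
  have hup : ∀ ε : ℝ, 0 < ε → ∀ᶠ lam in 𝓝[>] (0:ℝ), G lam ≤ c + ε := by
    intro ε hε
    by_contra hcon
    rw [Filter.not_eventually] at hcon
    have hfreq : ∃ᶠ lam in 𝓝[>] (0:ℝ), c + ε < G lam := by
      simpa [not_le] using hcon
    haveI hne : (𝓝[>] (0:ℝ) ⊓ 𝓟 {lam | c + ε < G lam}).NeBot :=
      Filter.frequently_iff_neBot.mp hfreq
    obtain ⟨u, hu⟩ := (𝓝[>] (0:ℝ) ⊓ 𝓟 {lam | c + ε < G lam}).exists_seq_tendsto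
    have hu0 : Tendsto u atTop (𝓝[>] (0:ℝ)) := hu.mono_right inf_le_left
    have hu0' : Tendsto u atTop (𝓝 (0:ℝ)) := hu0.mono_right nhdsWithin_le_nhds
    have hupos : ∀ᶠ n in atTop, 0 < u n := hu0 self_mem_nhdsWithin
    have huG : ∀ᶠ n in atTop, c + ε < G (u n) :=
      (hu.mono_right inf_le_right) (mem_principal_self _)
    -- sequential compactness
    obtain ⟨R, hRS, φ, hφ, hconv⟩ := h𝒮c.isSeqCompact (fun n => hQS (u n))
    set v : ℕ → ℝ := fun n => u (φ n) with hv
    have hv0 : Tendsto v atTop (𝓝 (0:ℝ)) := hu0'.comp hφ.tendsto_atTop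
    have hvpos : ∀ᶠ n in atTop, 0 < v n := hφ.tendsto_atTop.eventually hupos
    have hvG : ∀ᶠ n in atTop, c + ε < G (v n) := hφ.tendsto_atTop.eventually huG
    have hconv' : Tendsto (fun n => Q (v n)) atTop (𝓝[𝒮] R) := by
      rw [tendsto_nhdsWithin_iff]
      exact ⟨hconv, Eventually.of_forall fun n => hQS (v n)⟩
    have hηlim : Tendsto (fun n => fη (Q (v n))) atTop (𝓝 (fη R)) :=
      (hcη R hRS).tendsto.comp hconv'
    have hξlim : Tendsto (fun n => fξ (Q (v n))) atTop (𝓝 (fξ R)) :=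
      (hcξ R hRS).tendsto.comp hconv'
    -- G (v n) ≤ fη (Q (v n))
    have hGle : ∀ᶠ n in atTop, G (v n) ≤ fη (Q (v n)) := by
      filter_upwards [hvpos] with n hn
      have h1 : fξ (Q (v n)) ≤ sublinE 𝒮 ξ := hF0 ▸ hP₀max (hQS (v n))
      rw [hGdef, div_le_iff₀ hn]
      have := hQval (v n)
      nlinarith
    -- fη R ≥ c + ε
    have hηR : c + ε ≤ fη R := by
      refine ge_of_tendsto hηlim ?_
      filter_upwards [hvG, hGle] with n h1 h2
      linarith
    -- fξ (Q (v n)) squeezed to sublinE 𝒮 ξ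
    have hξR : fξ R = sublinE 𝒮 ξ := by
      have hub : ∀ n, fξ (Q (v n)) ≤ sublinE 𝒮 ξ := fun n => hF0 ▸ hP₀max (hQS (v n))
      have hlb : ∀ᶠ n in atTop,
          sublinE 𝒮 ξ - v n * (|c| + C + 1) ≤ fξ (Q (v n)) := by
        filter_upwards [hvpos] with n hn
        have h1 : c ≤ G (v n) := hlow (v n) hn
        have h2 : |fη (Q (v n))| ≤ C := hC _ (hQS (v n))
        have h3 := hQval (v n)
        have h4 : sublinE 𝒮 ξ + v n * c ≤ fξ (Q (v n)) + v n * fη (Q (v n)) := by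
          rw [hGdef, le_div_iff₀ hn] at h1
          nlinarith
        have h5 : -(|c|) ≤ c := neg_abs_le c
        have h6 : fη (Q (v n)) ≤ |fη (Q (v n))| := le_abs_self _
        nlinarith
      have hl : Tendsto (fun n => sublinE 𝒮 ξ - v n * (|c| + C + 1)) atTop
          (𝓝 (sublinE 𝒮 ξ - 0 * (|c| + C + 1))) :=
        tendsto_const_nhds.sub (hv0.mul tendsto_const_nhds)
      simp only [zero_mul, sub_zero] at hl
      have hge : sublinE 𝒮 ξ ≤ fξ R := le_of_tendsto_of_tendsto hl hξlim hlb
      have hle : fξ R ≤ sublinE 𝒮 ξ := le_of_tendsto hξlim (Eventually.of_forall hub)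
      exact le_antisymm hle hge
    have hRM : R ∈ maximizers 𝒮 ξ := ⟨hRS, hξR⟩
    have : fη R ≤ c := hc ▸ hPsmax hRM
    linarith
  -- assemble
  rw [tendsto_order]
  constructor
  · intro a ha
    filter_upwards [self_mem_nhdsWithin] with lam hlam
    exact lt_of_lt_of_le ha (hlow lam hlam)
  · intro b hb
    have hε : 0 < (b - c)/2 := by linarith
    filter_upwards [hup _ hε] with lam h
    linarith
end
end

section
/- Let k ≥ 1 and let φ : ℝ^k → ℝ be differentiable with gradient ∇φ bounded and Lipschitz continuous. Let ξ, η : Ω → ℝ^k be Borel maps whose components all belong to L¹(𝒫) and with sup_{P∈𝒫} ∫_Ω |η|² dP < ∞. Then for H(λ) := Ê[φ(ξ + λη)] the one-sided derivatives at 0 exist and H'₊(0) = Ê_{φ(ξ)}[⟨∇φ(ξ), η⟩] and H'₋(0) = −Ê_{φ(ξ)}[−⟨∇φ(ξ), η⟩]. -/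
open MeasureTheory Filter Topology Set

noncomputable section

variable {Ω : Type*} [MeasurableSpace Ω] [TopologicalSpace Ω]

section Helpers
open RealInnerProductSpace

/-- The integral of `f` as a function on the subtype `↥𝒮`. -/
def gInt (𝒮 : Set (ProbabilityMeasure Ω)) (f : Ω → ℝ) : ↥𝒮 → ℝ :=
  fun P => ∫ ω, f ω ∂((P : ProbabilityMeasure Ω) : Measure Ω)

lemma sublinECond_eq (𝒮 : Set (ProbabilityMeasure Ω)) (f u : Ω → ℝ) :
    sublinECond 𝒮 f u
      = ⨆ x : {y : ↥𝒮 | gInt 𝒮 f y = ⨆ P, gInt 𝒮 f P}, gInt 𝒮 u ↑x := by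
  rw [sublinECond, iSup, iSup]
  congr 1
  ext r
  simp only [Set.mem_range]
  constructor
  · rintro ⟨⟨P, hP1, hP2⟩, rfl⟩
    exact ⟨⟨⟨P, hP1⟩, hP2⟩, rfl⟩
  · rintro ⟨⟨⟨P, hP1⟩, hP2⟩, rfl⟩
    exact ⟨⟨P, hP1, hP2⟩, rfl⟩


lemma abs_ciSup_sub_ciSup {ι : Type*} [Nonempty ι] {a b : ι → ℝ} {c : ℝ}
    (hb : BddAbove (range b)) (h : ∀ i, |a i - b i| ≤ c) :
    |(⨆ i, a i) - ⨆ i, b i| ≤ c := by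
  have ha : BddAbove (range a) := by
    refine ⟨(⨆ i, b i) + c, ?_⟩
    rintro _ ⟨i, rfl⟩
    have h1 := abs_le.1 (h i)
    have h2 := le_ciSup hb i
    linarith [h1.2]
  rw [abs_le]
  constructor
  · have : (⨆ i, b i) ≤ (⨆ i, a i) + c :=
      ciSup_le fun i => by have h1 := abs_le.1 (h i); have h2 := le_ciSup ha i; linarith [h1.1]
    linarith
  · have : (⨆ i, a i) ≤ (⨆ i, b i) + c :=
      ciSup_le fun i => by have h1 := abs_le.1 (h i); have h2 := le_ciSup hb i; linarith [h1.2]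
    linarith

lemma danskin {X : Type*} [TopologicalSpace X] [CompactSpace X] [Nonempty X]
    (g h : X → ℝ) (hg : Continuous g) (hh : Continuous h) :
    Tendsto (fun lam : ℝ => ((⨆ x, (g x + lam * h x)) - ⨆ x, g x) / lam) (𝓝[>] 0)
      (𝓝 (⨆ x : {y : X | g y = ⨆ x, g x}, h ↑x)) := by
  obtain ⟨x₀, -, hx₀'⟩ := isCompact_univ.exists_isMaxOn univ_nonempty hg.continuousOn
  have hx₀ : ∀ y, g y ≤ g x₀ := fun y => hx₀' (mem_univ y)
  have hbg : BddAbove (range g) := (isCompact_range hg).bddAbove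
  set F0 : ℝ := ⨆ x, g x with hF0def
  have hF0 : F0 = g x₀ := le_antisymm (ciSup_le hx₀) (le_ciSup hbg x₀)
  haveI hMne : Nonempty {y : X | g y = F0} := ⟨⟨x₀, hF0.symm⟩⟩
  obtain ⟨z₀, -, hz₀'⟩ := isCompact_univ.exists_isMaxOn univ_nonempty
    (continuous_abs.comp hh).continuousOn
  have hz₀ : ∀ y, |h y| ≤ |h z₀| := fun y => hz₀' (mem_univ y)
  set C : ℝ := |h z₀| with hCdef
  have hC : ∀ x, |h x| ≤ C := hz₀
  have hC0 : 0 ≤ C := (abs_nonneg _).trans (hC z₀)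
  have hbM : BddAbove (range fun x : {y : X | g y = F0} => h ↑x) :=
    ⟨C, by rintro _ ⟨x, rfl⟩; exact (le_abs_self _).trans (hC _)⟩
  set s : ℝ := ⨆ x : {y : X | g y = F0}, h ↑x with hsdef
  have hbF : ∀ lam : ℝ, BddAbove (range fun x => g x + lam * h x) :=
    fun lam => (isCompact_range (hg.add (continuous_const.mul hh))).bddAbove
  -- lower bound
  have hlow : ∀ lam : ℝ, 0 < lam → s ≤ ((⨆ x, (g x + lam * h x)) - F0) / lam := by
    intro lam hlam
    refine ciSup_le fun x => ?_
    rw [le_div_iff₀ hlam]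
    have h1 : g ↑x + lam * h ↑x ≤ ⨆ x, (g x + lam * h x) := le_ciSup (hbF lam) (↑x)
    have h2 : g (↑x : X) = F0 := x.2
    nlinarith
  -- upper bound, eventually
  have hupp : ∀ ε : ℝ, 0 < ε → ∀ᶠ lam in 𝓝[>] (0:ℝ),
      ((⨆ x, (g x + lam * h x)) - F0) / lam ≤ s + ε := by
    intro ε hε
    have key : ∃ lam₀ : ℝ, 0 < lam₀ ∧ ∀ lam : ℝ, 0 < lam → lam < lam₀ →
        ∀ x, g x + lam * h x ≤ F0 + lam * (s + ε) := by
      set T : Set X := {x | s + ε ≤ h x} with hTdef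
      have hT : IsClosed T := isClosed_le continuous_const hh
      have hTM : ∀ x, g x = F0 → h x ≤ s := fun x hx =>
        le_ciSup hbM (⟨x, hx⟩ : {y : X | g y = F0})
      rcases T.eq_empty_or_nonempty with hTe | hTne
      · refine ⟨1, one_pos, fun lam hlam _ x => ?_⟩
        have hx : h x < s + ε := by
          by_contra hcon
          have hxT : x ∈ T := not_lt.1 hcon
          rw [hTe] at hxT
          exact hxT
        have := hx₀ x
        nlinarith [hF0]
      · obtain ⟨xT, hxTmem, hxT⟩ := hT.isCompact.exists_isMaxOn hTne hg.continuousOn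
        set m : ℝ := g xT with hmdef
        have hmlt : m < F0 := by
          rcases lt_or_eq_of_le (hx₀ xT) with hlt | heq
          · rw [hF0]; exact hlt
          · exfalso
            have : h xT ≤ s := hTM xT (by rw [hF0, heq])
            have : s + ε ≤ h xT := hxTmem
            linarith
        refine ⟨(F0 - m) / (C + |s| + ε + 1), div_pos (by linarith) (by positivity),
          fun lam hlam hlam' x => ?_⟩
        by_cases hx : x ∈ T
        · have h1 : g x ≤ m := hxT hx
          have h2 : h x ≤ C := (le_abs_self _).trans (hC x)
          have h3 : lam * (C + |s| + ε + 1) < F0 - m :=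
            (lt_div_iff₀ (by positivity)).1 hlam'
          nlinarith [abs_nonneg s, le_abs_self s, neg_abs_le s]
        · have hx' : h x < s + ε := not_le.1 hx
          have := hx₀ x
          nlinarith [hF0]
    obtain ⟨lam₀, hlam₀, hkey⟩ := key
    filter_upwards [Ioo_mem_nhdsGT_of_mem (Set.left_mem_Ico.2 hlam₀)] with lam hlam
    have h1 : (⨆ x, (g x + lam * h x)) ≤ F0 + lam * (s + ε) :=
      ciSup_le (hkey lam hlam.1 hlam.2)
    rw [div_le_iff₀ hlam.1]
    linarith
  -- combine
  rw [Metric.tendsto_nhdsWithin_nhds]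
  intro ε hε
  have hev := hupp (ε/2) (by linarith)
  rw [eventually_nhdsWithin_iff] at hev
  obtain ⟨δ, hδ, hδ'⟩ := Metric.eventually_nhds_iff.1 hev
  refine ⟨δ, hδ, fun {lam} hmem hdist => ?_⟩
  have h1 := hlow lam hmem
  have h2 := hδ' hdist hmem
  rw [Real.dist_eq, abs_lt]
  constructor <;> [linarith; linarith]

variable {k : ℕ}
local notation "E" => EuclideanSpace ℝ (Fin k)

lemma grad_fderiv (φ : E → ℝ) (x v : E) :
    ⟪gradient φ x, v⟫ = fderiv ℝ φ x v := InnerProductSpace.toDual_symm_apply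

lemma norm_grad_sub (φ : E → ℝ) (x y : E) :
    ‖fderiv ℝ φ y - fderiv ℝ φ x‖ = ‖gradient φ y - gradient φ x‖ := by
  rw [gradient, gradient, ← map_sub, LinearIsometryEquiv.norm_map]

lemma taylor_bound (φ : E → ℝ) (hφ : Differentiable ℝ φ) (K : NNReal)
    (hlip : LipschitzWith K (gradient φ)) (x v : E) :
    |φ (x + v) - φ x - ⟪gradient φ x, v⟫| ≤ K * ‖v‖ ^ 2 := by
  set ψ : E → ℝ := fun y => φ y - ⟪gradient φ x, y⟫ with hψ
  have h2 : ∀ y : E, HasFDerivAt (fun z : E => ⟪gradient φ x, z⟫) (fderiv ℝ φ x) y := by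
    intro y
    have : (innerSL ℝ (gradient φ x) : E →L[ℝ] ℝ) = fderiv ℝ φ x := by
      ext v; exact grad_fderiv φ x v
    exact this ▸ (innerSL ℝ (gradient φ x)).hasFDerivAt
  have hψd : ∀ y : E, HasFDerivAt ψ (fderiv ℝ φ y - fderiv ℝ φ x) y := fun y =>
    ((hφ y).hasFDerivAt).sub (h2 y)
  have seg : ∀ y ∈ segment ℝ x (x + v), ‖y - x‖ ≤ ‖v‖ := by
    intro y hy
    rw [segment_eq_image'] at hy
    obtain ⟨t, ⟨ht0, ht1⟩, rfl⟩ := hy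
    simp only [add_sub_cancel_left]
    rw [norm_smul, Real.norm_eq_abs, abs_of_nonneg ht0]
    nlinarith [norm_nonneg v]
  have key := (convex_segment x (x + v)).norm_image_sub_le_of_norm_hasFDerivWithin_le
    (f := ψ) (f' := fun y => fderiv ℝ φ y - fderiv ℝ φ x) (C := K * ‖v‖)
    (fun y _ => (hψd y).hasFDerivWithinAt)
    (fun y hy => by
      rw [norm_grad_sub]
      calc ‖gradient φ y - gradient φ x‖ ≤ K * ‖y - x‖ := by
            simpa [dist_eq_norm] using hlip.dist_le_mul y x
        _ ≤ K * ‖v‖ := mul_le_mul_of_nonneg_left (seg y hy) K.coe_nonneg)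
    (left_mem_segment ℝ x (x + v)) (right_mem_segment ℝ x (x + v))
  have : ψ (x + v) - ψ x = φ (x + v) - φ x - ⟪gradient φ x, v⟫ := by
    show (φ (x + v) - ⟪gradient φ x, x + v⟫) - (φ x - ⟪gradient φ x, x⟫) = _
    rw [inner_add_right]; ring
  rw [← this]
  calc |ψ (x + v) - ψ x| = ‖ψ (x + v) - ψ x‖ := (Real.norm_eq_abs _).symm
    _ ≤ K * ‖v‖ * ‖x + v - x‖ := key
    _ = K * ‖v‖ ^ 2 := by rw [add_sub_cancel_left]; ring

lemma phi_lip (φ : E → ℝ) (hφ : Differentiable ℝ φ) {M : ℝ} (hM : ∀ x, ‖gradient φ x‖ ≤ M) :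
    ∀ x y : E, |φ x - φ y| ≤ M * ‖x - y‖ := by
  intro x y
  have hb : ∀ z : E, ‖fderiv ℝ φ z‖ ≤ M := by
    intro z
    have hz : ‖gradient φ z‖ = ‖fderiv ℝ φ z‖ := by
      rw [gradient]; exact LinearIsometryEquiv.norm_map _ _
    rw [← hz]; exact hM z
  have := convex_univ.norm_image_sub_le_of_norm_fderiv_le
    (fun z _ => hφ z) (fun z _ => hb z) (mem_univ y) (mem_univ x)
  simpa [Real.norm_eq_abs] using this


lemma euclid_norm_le_sum (x : E) : ‖x‖ ≤ ∑ i, |x i| := by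
  rw [EuclideanSpace.norm_eq]
  have h1 : ∑ i, ‖x i‖ ^ 2 ≤ (∑ i, |x i|) ^ 2 := by
    calc ∑ i, ‖x i‖ ^ 2 = ∑ i, |x i| ^ 2 := by simp [Real.norm_eq_abs]
      _ ≤ (∑ i, |x i|) ^ 2 := Finset.sum_sq_le_sq_sum_of_nonneg (fun i _ => abs_nonneg _)
  calc Real.sqrt (∑ i, ‖x i‖ ^ 2) ≤ Real.sqrt ((∑ i, |x i|) ^ 2) := Real.sqrt_le_sqrt h1
    _ = ∑ i, |x i| := Real.sqrt_sq (Finset.sum_nonneg fun i _ => abs_nonneg _)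

lemma integrable_norm_of_memL1 {𝒮 : Set (ProbabilityMeasure Ω)} {ξ : Ω → E}
    (hξm : Measurable ξ) (hξ : ∀ i, MemL1 𝒮 (fun ω => ξ ω i)) {P : ProbabilityMeasure Ω}
    (hP : P ∈ 𝒮) : Integrable (fun ω => ‖ξ ω‖) (P : Measure Ω) := by
  have hsum : Integrable (fun ω => ∑ i, |ξ ω i|) (P : Measure Ω) :=
    integrable_finset_sum _ (fun i _ => ((hξ i).2.1 P hP).abs)
  refine hsum.mono' hξm.norm.aestronglyMeasurable ?_
  filter_upwards with ω
  rw [norm_norm]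
  exact euclid_norm_le_sum _

lemma integrable_phi_comp {φ : E → ℝ} (hφc : Continuous φ) {M : ℝ} (hM0 : 0 ≤ M)
    (hMlip : ∀ x y : E, |φ x - φ y| ≤ M * ‖x - y‖)
    {𝒮 : Set (ProbabilityMeasure Ω)} {ξ η : Ω → E}
    (hξm : Measurable ξ) (hηm : Measurable η)
    (hξ : ∀ i, MemL1 𝒮 (fun ω => ξ ω i)) (hη : ∀ i, MemL1 𝒮 (fun ω => η ω i))
    {P : ProbabilityMeasure Ω} (hP : P ∈ 𝒮) (c : ℝ) :
    Integrable (fun ω => φ (ξ ω + c • η ω)) (P : Measure Ω) := by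
  have hm : AEStronglyMeasurable (fun ω => φ (ξ ω + c • η ω)) (P : Measure Ω) :=
    (hφc.measurable.comp (hξm.add (hηm.const_smul c))).aestronglyMeasurable
  have hint : Integrable (fun ω => |φ 0| + (M * ‖ξ ω‖ + (M * |c|) * ‖η ω‖)) (P : Measure Ω) :=
    (integrable_const _).add (((integrable_norm_of_memL1 hξm hξ hP).const_mul M).add
      ((integrable_norm_of_memL1 hηm hη hP).const_mul (M * |c|)))
  refine hint.mono' hm ?_
  filter_upwards with ω
  rw [Real.norm_eq_abs]
  have h1 : |φ (ξ ω + c • η ω) - φ 0| ≤ M * ‖ξ ω + c • η ω‖ := by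
    simpa using hMlip (ξ ω + c • η ω) 0
  have h2 : ‖ξ ω + c • η ω‖ ≤ ‖ξ ω‖ + |c| * ‖η ω‖ := by
    calc ‖ξ ω + c • η ω‖ ≤ ‖ξ ω‖ + ‖c • η ω‖ := norm_add_le _ _
      _ = ‖ξ ω‖ + |c| * ‖η ω‖ := by rw [norm_smul, Real.norm_eq_abs]
  have h3 := abs_le.1 h1
  have h4 : M * ‖ξ ω + c • η ω‖ ≤ M * (‖ξ ω‖ + |c| * ‖η ω‖) :=
    mul_le_mul_of_nonneg_left h2 hM0
  have := abs_abs (φ 0)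
  calc |φ (ξ ω + c • η ω)| ≤ |φ 0| + M * ‖ξ ω + c • η ω‖ := by
        have := abs_sub_abs_le_abs_sub (φ (ξ ω + c • η ω)) (φ 0)
        have := abs_le.1 h1
        linarith [le_abs_self (φ (ξ ω + c • η ω) - φ 0)]
    _ ≤ |φ 0| + (M * ‖ξ ω‖ + M * |c| * ‖η ω‖) := by nlinarith
    _ = |φ 0| + (M * ‖ξ ω‖ + (M * |c|) * ‖η ω‖) := by ring

lemma integrable_inner_comp {φ : E → ℝ} {K : NNReal} (hgradlip : LipschitzWith K (gradient φ))
    {M : ℝ} (hgradbd : ∀ x, ‖gradient φ x‖ ≤ M)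
    {𝒮 : Set (ProbabilityMeasure Ω)} {ξ η : Ω → E}
    (hξm : Measurable ξ) (hηm : Measurable η)
    (hη : ∀ i, MemL1 𝒮 (fun ω => η ω i))
    {P : ProbabilityMeasure Ω} (hP : P ∈ 𝒮) :
    Integrable (fun ω => ⟪gradient φ (ξ ω), η ω⟫) (P : Measure Ω) := by
  have hm : AEStronglyMeasurable (fun ω => ⟪gradient φ (ξ ω), η ω⟫) (P : Measure Ω) :=
    (Measurable.inner (hgradlip.continuous.measurable.comp hξm) hηm).aestronglyMeasurable
  refine ((integrable_norm_of_memL1 hηm hη hP).const_mul M).mono' hm ?_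
  filter_upwards with ω
  rw [Real.norm_eq_abs]
  calc |⟪gradient φ (ξ ω), η ω⟫| ≤ ‖gradient φ (ξ ω)‖ * ‖η ω‖ := abs_real_inner_le_norm _ _
    _ ≤ M * ‖η ω‖ := mul_le_mul_of_nonneg_right (hgradbd _) (norm_nonneg _)

lemma integral_est {φ : E → ℝ} (hφc : Continuous φ) {K : NNReal}
    (hgradlip : LipschitzWith K (gradient φ))
    (htay : ∀ x v : E, |φ (x + v) - φ x - ⟪gradient φ x, v⟫| ≤ (K : ℝ) * ‖v‖ ^ 2)
    {M : ℝ} (hM0 : 0 ≤ M) (hMlip : ∀ x y : E, |φ x - φ y| ≤ M * ‖x - y‖)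
    (hgradbd : ∀ x, ‖gradient φ x‖ ≤ M)
    {𝒮 : Set (ProbabilityMeasure Ω)} {ξ η : Ω → E}
    (hξm : Measurable ξ) (hηm : Measurable η)
    (hξ : ∀ i, MemL1 𝒮 (fun ω => ξ ω i)) (hη : ∀ i, MemL1 𝒮 (fun ω => η ω i))
    (hη2int : ∀ P ∈ 𝒮, Integrable (fun ω => ‖η ω‖ ^ 2) (P : Measure Ω))
    {Mη : ℝ} (hη2bd : ∀ P ∈ 𝒮, ∫ ω, ‖η ω‖ ^ 2 ∂(P : Measure Ω) ≤ Mη)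
    {P : ProbabilityMeasure Ω} (hP : P ∈ 𝒮) (lam : ℝ) :
    |∫ ω, φ (ξ ω + lam • η ω) ∂(P : Measure Ω) -
      (∫ ω, φ (ξ ω) ∂(P : Measure Ω) +
        lam * ∫ ω, ⟪gradient φ (ξ ω), η ω⟫ ∂(P : Measure Ω))| ≤ (K : ℝ) * lam ^ 2 * Mη := by
  have i1 : Integrable (fun ω => φ (ξ ω + lam • η ω)) (P : Measure Ω) :=
    integrable_phi_comp hφc hM0 hMlip hξm hηm hξ hη hP lam
  have i0 : Integrable (fun ω => φ (ξ ω)) (P : Measure Ω) := by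
    have := integrable_phi_comp hφc hM0 hMlip hξm hηm hξ hη hP 0
    simpa using this
  have ii : Integrable (fun ω => ⟪gradient φ (ξ ω), η ω⟫) (P : Measure Ω) :=
    integrable_inner_comp hgradlip hgradbd hξm hηm hη hP
  have heq : ∫ ω, (φ (ξ ω + lam • η ω) - φ (ξ ω) - lam * ⟪gradient φ (ξ ω), η ω⟫)
        ∂(P : Measure Ω)
      = ∫ ω, φ (ξ ω + lam • η ω) ∂(P : Measure Ω) -
        (∫ ω, φ (ξ ω) ∂(P : Measure Ω) +
          lam * ∫ ω, ⟪gradient φ (ξ ω), η ω⟫ ∂(P : Measure Ω)) := by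
    have hfe : (fun ω => φ (ξ ω + lam • η ω) - φ (ξ ω) - lam * ⟪gradient φ (ξ ω), η ω⟫)
        = fun ω => φ (ξ ω + lam • η ω) - (φ (ξ ω) + lam * ⟪gradient φ (ξ ω), η ω⟫) :=
      funext fun ω => by ring
    have i01 : Integrable (fun ω => φ (ξ ω) + lam * ⟪gradient φ (ξ ω), η ω⟫) (P : Measure Ω) :=
      i0.add (ii.const_mul lam)
    rw [hfe, integral_sub i1 i01, integral_add i0 (ii.const_mul lam), integral_const_mul]
  rw [← heq]
  have hpt : ∀ ω, |φ (ξ ω + lam • η ω) - φ (ξ ω) - lam * ⟪gradient φ (ξ ω), η ω⟫|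
      ≤ (K : ℝ) * lam ^ 2 * ‖η ω‖ ^ 2 := by
    intro ω
    have := htay (ξ ω) (lam • η ω)
    rw [real_inner_smul_right, norm_smul, mul_pow, Real.norm_eq_abs, sq_abs] at this
    calc |φ (ξ ω + lam • η ω) - φ (ξ ω) - lam * ⟪gradient φ (ξ ω), η ω⟫|
        ≤ (K : ℝ) * (lam ^ 2 * ‖η ω‖ ^ 2) := this
      _ = (K : ℝ) * lam ^ 2 * ‖η ω‖ ^ 2 := by ring
  calc |∫ ω, (φ (ξ ω + lam • η ω) - φ (ξ ω) - lam * ⟪gradient φ (ξ ω), η ω⟫) ∂(P : Measure Ω)|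
      ≤ ∫ ω, |φ (ξ ω + lam • η ω) - φ (ξ ω) - lam * ⟪gradient φ (ξ ω), η ω⟫| ∂(P : Measure Ω) :=
        by
          have := norm_integral_le_integral_norm (μ := (P : Measure Ω))
            (f := fun ω => φ (ξ ω + lam • η ω) - φ (ξ ω) - lam * ⟪gradient φ (ξ ω), η ω⟫)
          simpa [Real.norm_eq_abs] using this
    _ ≤ ∫ ω, (K : ℝ) * lam ^ 2 * ‖η ω‖ ^ 2 ∂(P : Measure Ω) := by
        refine integral_mono ((i1.sub i0).sub (ii.const_mul lam)).abs
          ((hη2int P hP).const_mul _) hpt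
    _ = (K : ℝ) * lam ^ 2 * ∫ ω, ‖η ω‖ ^ 2 ∂(P : Measure Ω) := integral_const_mul _ _
    _ ≤ (K : ℝ) * lam ^ 2 * Mη := by
        refine mul_le_mul_of_nonneg_left (hη2bd P hP) (by positivity)

lemma vec_approx [OpensMeasurableSpace Ω] {𝒮 : Set (ProbabilityMeasure Ω)} {ξ : Ω → E}
    (hξm : Measurable ξ) (hξ : ∀ i, MemL1 𝒮 (fun ω => ξ ω i)) {δ : ℝ} (hδ : 0 < δ) :
    ∃ (Θ : Ω → E) (B : ℝ), Continuous Θ ∧ (∀ ω, ‖Θ ω‖ ≤ B) ∧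
      ∀ P ∈ 𝒮, Integrable (fun ω => ‖ξ ω - Θ ω‖) (P : Measure Ω) ∧
        ∫ ω, ‖ξ ω - Θ ω‖ ∂(P : Measure Ω) ≤ δ := by
  have hδ' : 0 < δ / (k + 1) := by positivity
  choose θ hθ using fun i : Fin k => (hξ i).2.2 (δ / (k + 1)) hδ'
  set Θ : Ω → E := fun ω => (EuclideanSpace.equiv (Fin k) ℝ).symm (fun i => θ i ω) with hΘdef
  have hΘc : Continuous Θ :=
    (EuclideanSpace.equiv (Fin k) ℝ).symm.continuous.comp
      (continuous_pi fun i => (θ i).continuous)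
  have hcomp : ∀ ω i, (ξ ω - Θ ω) i = ξ ω i - θ i ω := fun ω i => rfl
  refine ⟨Θ, ∑ i, ‖θ i‖, hΘc, ?_, ?_⟩
  · intro ω
    calc ‖Θ ω‖ ≤ ∑ i, |Θ ω i| := euclid_norm_le_sum _
      _ ≤ ∑ i, ‖θ i‖ := Finset.sum_le_sum fun i _ => by
          have := (θ i).norm_coe_le_norm ω
          rw [Real.norm_eq_abs] at this
          exact this
  · intro P hP
    have hintsum : Integrable (fun ω => ∑ i, |ξ ω i - θ i ω|) (P : Measure Ω) :=
      integrable_finset_sum _ (fun i _ =>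
        (((hξ i).2.1 P hP).sub ((θ i).integrable _)).abs)
    have hintn : Integrable (fun ω => ‖ξ ω - Θ ω‖) (P : Measure Ω) := by
      refine hintsum.mono' ((hξm.sub hΘc.measurable).norm.aestronglyMeasurable) ?_
      filter_upwards with ω
      rw [norm_norm]
      calc ‖ξ ω - Θ ω‖ ≤ ∑ i, |(ξ ω - Θ ω) i| := euclid_norm_le_sum _
        _ = ∑ i, |ξ ω i - θ i ω| := by simp [hcomp]
    refine ⟨hintn, ?_⟩
    calc ∫ ω, ‖ξ ω - Θ ω‖ ∂(P : Measure Ω)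
        ≤ ∫ ω, ∑ i, |ξ ω i - θ i ω| ∂(P : Measure Ω) := by
          refine integral_mono hintn hintsum fun ω => ?_
          calc ‖ξ ω - Θ ω‖ ≤ ∑ i, |(ξ ω - Θ ω) i| := euclid_norm_le_sum _
            _ = ∑ i, |ξ ω i - θ i ω| := by simp [hcomp]
      _ = ∑ i, ∫ ω, |ξ ω i - θ i ω| ∂(P : Measure Ω) :=
          integral_finset_sum _ (fun i _ => (((hξ i).2.1 P hP).sub ((θ i).integrable _)).abs)
      _ ≤ ∑ _i : Fin k, δ / (k + 1) := Finset.sum_le_sum fun i _ => hθ i P hP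
      _ = k * (δ / (k + 1)) := by simp [Finset.sum_const, nsmul_eq_mul]
      _ ≤ δ := by
          rw [← mul_div_assoc, div_le_iff₀ (by positivity)]
          nlinarith [Nat.cast_nonneg (α := ℝ) k]

lemma approx_phi [OpensMeasurableSpace Ω] {φ : E → ℝ} (hφc : Continuous φ)
    {M : ℝ} (hM0 : 0 ≤ M) (hMlip : ∀ x y : E, |φ x - φ y| ≤ M * ‖x - y‖)
    {𝒮 : Set (ProbabilityMeasure Ω)} {ξ : Ω → E}
    (hξm : Measurable ξ) (hξ : ∀ i, MemL1 𝒮 (fun ω => ξ ω i)) {δ : ℝ} (hδ : 0 < δ) :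
    ∃ θ : BoundedContinuousFunction Ω ℝ,
      ∀ P ∈ 𝒮, ∫ ω, |φ (ξ ω) - θ ω| ∂(P : Measure Ω) ≤ δ := by
  obtain ⟨Θ, B, hΘc, hΘb, hΘ⟩ := vec_approx hξm hξ (δ := δ / (M + 1)) (by positivity)
  have hθb : ∀ ω, ‖φ (Θ ω)‖ ≤ |φ 0| + M * B := by
    intro ω
    rw [Real.norm_eq_abs]
    have h1 := hMlip (Θ ω) 0
    rw [sub_zero] at h1
    have h2 : M * ‖Θ ω‖ ≤ M * B := mul_le_mul_of_nonneg_left (hΘb ω) hM0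
    have h3 := abs_sub_abs_le_abs_sub (φ (Θ ω)) (φ 0)
    linarith
  refine ⟨BoundedContinuousFunction.ofNormedAddCommGroup _ (hφc.comp hΘc) _ hθb,
    fun P hP => ?_⟩
  obtain ⟨hint1, hint2⟩ := hΘ P hP
  have i0 : Integrable (fun ω => φ (ξ ω)) (P : Measure Ω) := by
    simpa using integrable_phi_comp hφc hM0 hMlip hξm hξm hξ hξ hP 0
  have iθ : Integrable (fun ω => φ (Θ ω)) (P : Measure Ω) :=
    (integrable_const (|φ 0| + M * B)).mono'
      ((hφc.comp hΘc).measurable.aestronglyMeasurable)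
      (Eventually.of_forall fun ω => by simpa using hθb ω)
  calc ∫ ω, |φ (ξ ω) - φ (Θ ω)| ∂(P : Measure Ω)
      ≤ ∫ ω, M * ‖ξ ω - Θ ω‖ ∂(P : Measure Ω) := by
        refine integral_mono (i0.sub iθ).abs (hint1.const_mul M) fun ω => hMlip _ _
    _ = M * ∫ ω, ‖ξ ω - Θ ω‖ ∂(P : Measure Ω) := integral_const_mul _ _
    _ ≤ M * (δ / (M + 1)) := mul_le_mul_of_nonneg_left hint2 hM0
    _ ≤ δ := by rw [mul_div_assoc'] at *; rw [div_le_iff₀ (by positivity)]; nlinarith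

lemma approx_inner [OpensMeasurableSpace Ω] {φ : E → ℝ} {K : NNReal}
    (hgradlip : LipschitzWith K (gradient φ))
    {M : ℝ} (hM0 : 0 ≤ M) (hgradbd : ∀ x, ‖gradient φ x‖ ≤ M)
    {𝒮 : Set (ProbabilityMeasure Ω)} {ξ η : Ω → E}
    (hξm : Measurable ξ) (hηm : Measurable η)
    (hξ : ∀ i, MemL1 𝒮 (fun ω => ξ ω i)) (hη : ∀ i, MemL1 𝒮 (fun ω => η ω i))
    (hη2int : ∀ P ∈ 𝒮, Integrable (fun ω => ‖η ω‖ ^ 2) (P : Measure Ω))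
    {Mη : ℝ} (hMη0 : 0 ≤ Mη)
    (hη2bd : ∀ P ∈ 𝒮, ∫ ω, ‖η ω‖ ^ 2 ∂(P : Measure Ω) ≤ Mη) {δ : ℝ} (hδ : 0 < δ) :
    ∃ θ : BoundedContinuousFunction Ω ℝ,
      ∀ P ∈ 𝒮, ∫ ω, |⟪gradient φ (ξ ω), η ω⟫ - θ ω| ∂(P : Measure Ω) ≤ δ := by
  set R : ℝ := max 1 (6 * M * Mη / δ) with hRdef
  have hR1 : (1:ℝ) ≤ R := le_max_left _ _
  have hR0 : (0:ℝ) < R := lt_of_lt_of_le one_pos hR1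
  have hRM : 6 * M * Mη / δ ≤ R := le_max_right _ _
  have h6 : 6 * M * Mη ≤ R * δ := (div_le_iff₀ hδ).1 hRM
  obtain ⟨Θ, BΘ, hΘc, hΘb, hΘ⟩ := vec_approx hξm hξ (δ := δ / (3 * ((K:ℝ) + 1) * R))
    (by positivity)
  obtain ⟨Z, BZ, hZc, hZb, hZ⟩ := vec_approx hηm hη (δ := δ / (3 * (M + 1))) (by positivity)
  have hθc : Continuous (fun ω => ⟪gradient φ (Θ ω), Z ω⟫ : Ω → ℝ) :=
    (hgradlip.continuous.comp hΘc).inner hZc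
  have hθb : ∀ ω, ‖(⟪gradient φ (Θ ω), Z ω⟫ : ℝ)‖ ≤ M * BZ := by
    intro ω
    rw [Real.norm_eq_abs]
    calc |(⟪gradient φ (Θ ω), Z ω⟫ : ℝ)| ≤ ‖gradient φ (Θ ω)‖ * ‖Z ω‖ :=
          abs_real_inner_le_norm _ _
      _ ≤ M * BZ := mul_le_mul (hgradbd _) (hZb ω) (norm_nonneg _) hM0
  refine ⟨BoundedContinuousFunction.ofNormedAddCommGroup _ hθc _ hθb, fun P hP => ?_⟩
  obtain ⟨hintΘ, hintΘ2⟩ := hΘ P hP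
  have hZP := hZ P hP
  obtain ⟨hintZ, hintZ2⟩ := hZP
  have hpt : ∀ ω, |(⟪gradient φ (ξ ω), η ω⟫ : ℝ) - ⟪gradient φ (Θ ω), Z ω⟫| ≤
      ((K:ℝ) + 1) * R * ‖ξ ω - Θ ω‖ + (2 * M / R) * ‖η ω‖ ^ 2 + M * ‖η ω - Z ω‖ := by
    intro ω
    have t1 : |(⟪gradient φ (ξ ω) - gradient φ (Θ ω), η ω⟫ : ℝ)| ≤
        ‖gradient φ (ξ ω) - gradient φ (Θ ω)‖ * ‖η ω‖ := abs_real_inner_le_norm _ _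
    have t2 : |(⟪gradient φ (Θ ω), η ω - Z ω⟫ : ℝ)| ≤ M * ‖η ω - Z ω‖ :=
      le_trans (abs_real_inner_le_norm _ _)
        (mul_le_mul_of_nonneg_right (hgradbd _) (norm_nonneg _))
    have tsplit : (⟪gradient φ (ξ ω), η ω⟫ : ℝ) - ⟪gradient φ (Θ ω), Z ω⟫ =
        ⟪gradient φ (ξ ω) - gradient φ (Θ ω), η ω⟫ + ⟪gradient φ (Θ ω), η ω - Z ω⟫ := by
      rw [inner_sub_left, inner_sub_right]; ring
    have tK : ‖gradient φ (ξ ω) - gradient φ (Θ ω)‖ ≤ (K:ℝ) * ‖ξ ω - Θ ω‖ := by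
      simpa [dist_eq_norm] using hgradlip.dist_le_mul (ξ ω) (Θ ω)
    have tM : ‖gradient φ (ξ ω) - gradient φ (Θ ω)‖ ≤ 2 * M := by
      calc ‖gradient φ (ξ ω) - gradient φ (Θ ω)‖
          ≤ ‖gradient φ (ξ ω)‖ + ‖gradient φ (Θ ω)‖ := norm_sub_le _ _
        _ ≤ 2 * M := by have := hgradbd (ξ ω); have := hgradbd (Θ ω); linarith
    have tcase : ‖gradient φ (ξ ω) - gradient φ (Θ ω)‖ * ‖η ω‖ ≤
        ((K:ℝ) + 1) * R * ‖ξ ω - Θ ω‖ + (2 * M / R) * ‖η ω‖ ^ 2 := by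
      rcases le_or_gt ‖η ω‖ R with hc | hc
      · have e1 : ‖gradient φ (ξ ω) - gradient φ (Θ ω)‖ * ‖η ω‖ ≤
            ((K:ℝ) * ‖ξ ω - Θ ω‖) * R :=
          mul_le_mul tK hc (norm_nonneg _) (by positivity)
        have e2 : ((K:ℝ) * ‖ξ ω - Θ ω‖) * R ≤ ((K:ℝ) + 1) * R * ‖ξ ω - Θ ω‖ := by
          nlinarith [norm_nonneg (ξ ω - Θ ω), hR0.le, K.coe_nonneg]
        have e3 : (0:ℝ) ≤ (2 * M / R) * ‖η ω‖ ^ 2 := by positivity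
        linarith
      · have e1 : ‖gradient φ (ξ ω) - gradient φ (Θ ω)‖ * ‖η ω‖ ≤ 2 * M * ‖η ω‖ :=
          mul_le_mul_of_nonneg_right tM (norm_nonneg _)
        have e2 : 2 * M * ‖η ω‖ ≤ (2 * M / R) * ‖η ω‖ ^ 2 := by
          have h2MR : (0:ℝ) ≤ 2 * M / R := by positivity
          have key : (2 * M / R) * (R * ‖η ω‖) ≤ (2 * M / R) * (‖η ω‖ * ‖η ω‖) := by
            refine mul_le_mul_of_nonneg_left ?_ h2MR
            nlinarith [norm_nonneg (η ω)]
          have e4 : (2 * M / R) * (R * ‖η ω‖) = 2 * M * ‖η ω‖ := by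
            field_simp
          nlinarith [key, e4]
        have e3 : (0:ℝ) ≤ ((K:ℝ) + 1) * R * ‖ξ ω - Θ ω‖ := by positivity
        linarith
    calc |(⟪gradient φ (ξ ω), η ω⟫ : ℝ) - ⟪gradient φ (Θ ω), Z ω⟫|
        ≤ |(⟪gradient φ (ξ ω) - gradient φ (Θ ω), η ω⟫ : ℝ)| +
          |(⟪gradient φ (Θ ω), η ω - Z ω⟫ : ℝ)| := by rw [tsplit]; exact abs_add_le _ _
      _ ≤ ((K:ℝ) + 1) * R * ‖ξ ω - Θ ω‖ + (2 * M / R) * ‖η ω‖ ^ 2 + M * ‖η ω - Z ω‖ := by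
          linarith [le_trans t1 tcase]
  have i_inner : Integrable (fun ω => (⟪gradient φ (ξ ω), η ω⟫ : ℝ)) (P : Measure Ω) :=
    integrable_inner_comp hgradlip hgradbd hξm hηm hη hP
  have iθ : Integrable (fun ω => (⟪gradient φ (Θ ω), Z ω⟫ : ℝ)) (P : Measure Ω) := by
    refine (integrable_const (M * BZ)).mono' hθc.measurable.aestronglyMeasurable ?_
    filter_upwards with ω
    simpa using hθb ω
  have iA : Integrable (fun ω => ((K:ℝ) + 1) * R * ‖ξ ω - Θ ω‖) (P : Measure Ω) :=
    hintΘ.const_mul _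
  have iB : Integrable (fun ω => (2 * M / R) * ‖η ω‖ ^ 2) (P : Measure Ω) :=
    (hη2int P hP).const_mul _
  have iC : Integrable (fun ω => M * ‖η ω - Z ω‖) (P : Measure Ω) := hintZ.const_mul _
  have iAB : Integrable
      (fun ω => ((K:ℝ) + 1) * R * ‖ξ ω - Θ ω‖ + (2 * M / R) * ‖η ω‖ ^ 2) (P : Measure Ω) :=
    iA.add iB
  calc ∫ ω, |(⟪gradient φ (ξ ω), η ω⟫ : ℝ) - ⟪gradient φ (Θ ω), Z ω⟫| ∂(P : Measure Ω)
      ≤ ∫ ω, (((K:ℝ) + 1) * R * ‖ξ ω - Θ ω‖ + (2 * M / R) * ‖η ω‖ ^ 2 + M * ‖η ω - Z ω‖)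
          ∂(P : Measure Ω) := integral_mono ((i_inner.sub iθ).abs) (iAB.add iC) hpt
    _ = (((K:ℝ) + 1) * R) * (∫ ω, ‖ξ ω - Θ ω‖ ∂(P : Measure Ω)) +
        (2 * M / R) * (∫ ω, ‖η ω‖ ^ 2 ∂(P : Measure Ω)) +
        M * (∫ ω, ‖η ω - Z ω‖ ∂(P : Measure Ω)) := by
        rw [integral_add iAB iC, integral_add iA iB, integral_const_mul, integral_const_mul,
          integral_const_mul, mul_assoc]
    _ ≤ (((K:ℝ) + 1) * R) * (δ / (3 * ((K:ℝ) + 1) * R)) + (2 * M / R) * Mη +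
        M * (δ / (3 * (M + 1))) := by
        have b1 := mul_le_mul_of_nonneg_left hintΘ2 (by positivity : (0:ℝ) ≤ ((K:ℝ) + 1) * R)
        have b2 := mul_le_mul_of_nonneg_left (hη2bd P hP) (by positivity : (0:ℝ) ≤ 2 * M / R)
        have b3 := mul_le_mul_of_nonneg_left hintZ2 hM0
        linarith
    _ ≤ δ / 3 + δ / 3 + δ / 3 := by
        have c1 : (((K:ℝ) + 1) * R) * (δ / (3 * ((K:ℝ) + 1) * R)) = δ / 3 := by
          field_simp
        have c2 : (2 * M / R) * Mη ≤ δ / 3 := by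
          rw [div_mul_eq_mul_div, div_le_div_iff₀ hR0 (by norm_num)]
          nlinarith
        have c3 : M * (δ / (3 * (M + 1))) ≤ δ / 3 := by
          rw [mul_div_assoc'] at *
          rw [div_le_div_iff₀ (by positivity) (by norm_num)]
          nlinarith
        linarith
    _ = δ := by ring

lemma cont_integral [OpensMeasurableSpace Ω] {𝒮 : Set (ProbabilityMeasure Ω)} {f : Ω → ℝ}
    (happ : ∀ δ : ℝ, 0 < δ → ∃ θ : BoundedContinuousFunction Ω ℝ,
      ∀ P ∈ 𝒮, ∫ ω, |f ω - θ ω| ∂(P : Measure Ω) ≤ δ)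
    (hint : ∀ P ∈ 𝒮, Integrable f (P : Measure Ω)) :
    ContinuousOn (fun P : ProbabilityMeasure Ω => ∫ ω, f ω ∂(P : Measure Ω)) 𝒮 := by
  choose θ hθ using fun n : ℕ => happ (1 / (n + 1)) (by positivity)
  have hFcont : ∀ n : ℕ,
      Continuous (fun P : ProbabilityMeasure Ω => ∫ ω, (θ n) ω ∂(P : Measure Ω)) := by
    intro n
    rw [continuous_iff_continuousAt]
    intro P
    exact MeasureTheory.ProbabilityMeasure.tendsto_iff_forall_integral_tendsto.1 tendsto_id (θ n)
  suffices htu : TendstoUniformlyOn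
      (fun n (P : ProbabilityMeasure Ω) => ∫ ω, (θ n) ω ∂(P : Measure Ω))
      (fun P : ProbabilityMeasure Ω => ∫ ω, f ω ∂(P : Measure Ω)) atTop 𝒮 by
    exact htu.continuousOn (Eventually.of_forall fun n => (hFcont n).continuousOn).frequently
  rw [Metric.tendstoUniformlyOn_iff]
  intro ε hε
  obtain ⟨N, hN⟩ := exists_nat_gt (1 / ε)
  filter_upwards [eventually_ge_atTop N] with n hn P hP
  rw [Real.dist_eq]
  have h1 : |∫ ω, f ω ∂(P : Measure Ω) - ∫ ω, (θ n) ω ∂(P : Measure Ω)| ≤ 1 / (n + 1) := by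
    rw [← integral_sub (hint P hP) ((θ n).integrable _)]
    calc |∫ ω, (f ω - (θ n) ω) ∂(P : Measure Ω)|
        ≤ ∫ ω, |f ω - (θ n) ω| ∂(P : Measure Ω) := by
          have := norm_integral_le_integral_norm (μ := (P : Measure Ω))
            (f := fun ω => f ω - (θ n) ω)
          simpa [Real.norm_eq_abs] using this
      _ ≤ 1 / (n + 1) := hθ n P hP
  have h2 : (1 : ℝ) / (n + 1) < ε := by
    have hNn : (N : ℝ) ≤ n := Nat.cast_le.2 hn
    have : (1 : ℝ) / ε < n + 1 := by
      calc (1 : ℝ) / ε < N := hN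
        _ ≤ n + 1 := by linarith
    rw [div_lt_iff₀ (by positivity)]
    rw [div_lt_iff₀ hε] at this
    nlinarith
  linarith

end Helpers

open RealInnerProductSpace in
/-- the `k`-dimensional version of Statement 10, with the gradient `∇φ`. -/
theorem stmt_11 {Ω : Type*} [MeasurableSpace Ω] [TopologicalSpace Ω] [PolishSpace Ω] [BorelSpace Ω]
    (𝒮 : Set (ProbabilityMeasure Ω)) (h𝒮ne : 𝒮.Nonempty) (h𝒮c : IsCompact 𝒮)
    (k : ℕ) (hk : 1 ≤ k)
    (φ : EuclideanSpace ℝ (Fin k) → ℝ) (hφdiff : Differentiable ℝ φ)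
    (M : ℝ) (hgradbd : ∀ x, ‖gradient φ x‖ ≤ M)
    (K : NNReal) (hgradlip : LipschitzWith K (gradient φ))
    (ξ η : Ω → EuclideanSpace ℝ (Fin k)) (hξm : Measurable ξ) (hηm : Measurable η)
    (hξ : ∀ i, MemL1 𝒮 (fun ω => ξ ω i)) (hη : ∀ i, MemL1 𝒮 (fun ω => η ω i))
    (hη2int : ∀ P ∈ 𝒮, Integrable (fun ω => ‖η ω‖ ^ 2) (P : Measure Ω))
    (Mη : ℝ) (hη2bd : ∀ P ∈ 𝒮, ∫ ω, ‖η ω‖ ^ 2 ∂(P : Measure Ω) ≤ Mη) :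
    Tendsto
      (fun lam : ℝ =>
        (sublinE 𝒮 (fun ω => φ (ξ ω + lam • η ω)) - sublinE 𝒮 (fun ω => φ (ξ ω))) / lam)
      (𝓝[>] 0)
      (𝓝 (sublinECond 𝒮 (fun ω => φ (ξ ω)) (fun ω => ⟪gradient φ (ξ ω), η ω⟫))) ∧
    Tendsto
      (fun lam : ℝ =>
        (sublinE 𝒮 (fun ω => φ (ξ ω + lam • η ω)) - sublinE 𝒮 (fun ω => φ (ξ ω))) / lam)
      (𝓝[<] 0)
      (𝓝 (-(sublinECond 𝒮 (fun ω => φ (ξ ω)) (fun ω => -⟪gradient φ (ξ ω), η ω⟫)))) := by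
  classical
  haveI hne : Nonempty ↥𝒮 := h𝒮ne.to_subtype
  haveI hcs : CompactSpace ↥𝒮 := isCompact_iff_compactSpace.mp h𝒮c
  have hφc : Continuous φ := hφdiff.continuous
  have hM0 : (0:ℝ) ≤ M := le_trans (norm_nonneg _) (hgradbd 0)
  have hMlip : ∀ x y : EuclideanSpace ℝ (Fin k), |φ x - φ y| ≤ M * ‖x - y‖ :=
    phi_lip φ hφdiff hgradbd
  have htay : ∀ x v : EuclideanSpace ℝ (Fin k),
      |φ (x + v) - φ x - ⟪gradient φ x, v⟫| ≤ (K:ℝ) * ‖v‖ ^ 2 :=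
    taylor_bound φ hφdiff K hgradlip
  obtain ⟨P₀, hP₀⟩ := h𝒮ne
  have hMη0 : (0:ℝ) ≤ Mη :=
    le_trans (integral_nonneg fun ω => sq_nonneg _) (hη2bd P₀ hP₀)
  -- continuity of the three integral functionals on the compact set 𝒮
  have hGcont : Continuous (gInt 𝒮 (fun ω => φ (ξ ω))) :=
    (cont_integral (fun δ hδ => approx_phi hφc hM0 hMlip hξm hξ hδ)
      (fun P hP => by simpa using integrable_phi_comp hφc hM0 hMlip hξm hξm hξ hξ hP 0)).restrict
  have hHcont : Continuous (gInt 𝒮 (fun ω => (⟪gradient φ (ξ ω), η ω⟫ : ℝ))) :=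
    (cont_integral
      (fun δ hδ => approx_inner hgradlip hM0 hgradbd hξm hηm hξ hη hη2int hMη0 hη2bd hδ)
      (fun P hP => integrable_inner_comp hgradlip hgradbd hξm hηm hη hP)).restrict
  have hNcont : Continuous (gInt 𝒮 (fun ω => -(⟪gradient φ (ξ ω), η ω⟫ : ℝ))) := by
    refine (cont_integral (f := fun ω => -(⟪gradient φ (ξ ω), η ω⟫ : ℝ)) (fun δ hδ => ?_)
      (fun P hP => (integrable_inner_comp hgradlip hgradbd hξm hηm hη hP).neg)).restrict
    obtain ⟨θ, hθ⟩ := approx_inner hgradlip hM0 hgradbd hξm hηm hξ hη hη2int hMη0 hη2bd hδ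
    refine ⟨-θ, fun P hP => ?_⟩
    have heq : ∫ ω, |-(⟪gradient φ (ξ ω), η ω⟫ : ℝ) - (-θ) ω| ∂(P : Measure Ω)
        = ∫ ω, |(⟪gradient φ (ξ ω), η ω⟫ : ℝ) - θ ω| ∂(P : Measure Ω) := by
      refine integral_congr_ae (Eventually.of_forall fun ω => ?_)
      simp only [BoundedContinuousFunction.coe_neg, Pi.neg_apply]
      rw [show -(⟪gradient φ (ξ ω), η ω⟫ : ℝ) - -(θ ω)
          = -((⟪gradient φ (ξ ω), η ω⟫ : ℝ) - θ ω) by ring, abs_neg]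
    rw [heq]
    exact hθ P hP
  have hnegh : ∀ x : ↥𝒮, gInt 𝒮 (fun ω => -(⟪gradient φ (ξ ω), η ω⟫ : ℝ)) x
      = -(gInt 𝒮 (fun ω => (⟪gradient φ (ξ ω), η ω⟫ : ℝ)) x) := fun x => integral_neg _
  -- uniform second-order error estimate
  have herr : ∀ lam : ℝ,
      |sublinE 𝒮 (fun ω => φ (ξ ω + lam • η ω)) -
        ⨆ x, (gInt 𝒮 (fun ω => φ (ξ ω)) x +
          lam * gInt 𝒮 (fun ω => (⟪gradient φ (ξ ω), η ω⟫ : ℝ)) x)| ≤ (K:ℝ) * lam ^ 2 * Mη := by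
    intro lam
    have hbb : BddAbove (range fun x : ↥𝒮 =>
        gInt 𝒮 (fun ω => φ (ξ ω)) x +
          lam * gInt 𝒮 (fun ω => (⟪gradient φ (ξ ω), η ω⟫ : ℝ)) x) :=
      (isCompact_range (hGcont.add (continuous_const.mul hHcont))).bddAbove
    exact abs_ciSup_sub_ciSup hbb fun P =>
      integral_est hφc hgradlip htay hM0 hMlip hgradbd hξm hηm hξ hη hη2int hη2bd P.2 lam
  have htendK : Tendsto (fun lam : ℝ => (K:ℝ) * Mη * |lam|) (𝓝[>] (0:ℝ)) (𝓝 0) := by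
    have hc : Continuous fun lam : ℝ => (K:ℝ) * Mη * |lam| := continuous_const.mul continuous_abs
    have h0 := hc.tendsto 0
    simp only [abs_zero, mul_zero] at h0
    exact h0.mono_left nhdsWithin_le_nhds
  have hD1 := danskin _ _ hGcont hHcont
  have hD2 := danskin _ _ hGcont hNcont
  have hsub0 : sublinE 𝒮 (fun ω => φ (ξ ω)) = ⨆ x, gInt 𝒮 (fun ω => φ (ξ ω)) x := rfl
  constructor
  · -- right derivative
    have he : Tendsto (fun lam : ℝ =>
        (sublinE 𝒮 (fun ω => φ (ξ ω + lam • η ω)) -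
          ⨆ x, (gInt 𝒮 (fun ω => φ (ξ ω)) x +
            lam * gInt 𝒮 (fun ω => (⟪gradient φ (ξ ω), η ω⟫ : ℝ)) x)) / lam)
        (𝓝[>] 0) (𝓝 0) := by
      refine squeeze_zero_norm' ?_ htendK
      filter_upwards [self_mem_nhdsWithin] with lam hlam
      have hlam' : (0:ℝ) < lam := hlam
      have h1 := herr lam
      rw [Real.norm_eq_abs, abs_div, abs_of_pos hlam', div_le_iff₀ hlam']
      calc |sublinE 𝒮 (fun ω => φ (ξ ω + lam • η ω)) -
          ⨆ x, (gInt 𝒮 (fun ω => φ (ξ ω)) x +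
            lam * gInt 𝒮 (fun ω => (⟪gradient φ (ξ ω), η ω⟫ : ℝ)) x)|
          ≤ (K:ℝ) * lam ^ 2 * Mη := h1
        _ = (K:ℝ) * Mη * lam * lam := by ring
    have hsum := hD1.add he
    rw [add_zero] at hsum
    rw [sublinECond_eq]
    refine Filter.Tendsto.congr' ?_ hsum
    filter_upwards [self_mem_nhdsWithin] with lam hlam
    rw [← add_div]
    congr 1
    rw [hsub0]
    ring
  · -- left derivative
    have hsup2 : ∀ mu : ℝ,
        (⨆ x, (gInt 𝒮 (fun ω => φ (ξ ω)) x +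
          mu * gInt 𝒮 (fun ω => -(⟪gradient φ (ξ ω), η ω⟫ : ℝ)) x))
        = ⨆ x, (gInt 𝒮 (fun ω => φ (ξ ω)) x +
          (-mu) * gInt 𝒮 (fun ω => (⟪gradient φ (ξ ω), η ω⟫ : ℝ)) x) := by
      intro mu
      refine iSup_congr fun x => ?_
      rw [hnegh x]
      ring
    have heA : Tendsto (fun mu : ℝ =>
        (sublinE 𝒮 (fun ω => φ (ξ ω + (-mu) • η ω)) -
          ⨆ x, (gInt 𝒮 (fun ω => φ (ξ ω)) x +
            mu * gInt 𝒮 (fun ω => -(⟪gradient φ (ξ ω), η ω⟫ : ℝ)) x)) / mu)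
        (𝓝[>] 0) (𝓝 0) := by
      refine squeeze_zero_norm' ?_ htendK
      filter_upwards [self_mem_nhdsWithin] with mu hmu
      have hmu' : (0:ℝ) < mu := hmu
      have h1 := herr (-mu)
      rw [neg_sq] at h1
      rw [hsup2 mu, Real.norm_eq_abs, abs_div, abs_of_pos hmu', div_le_iff₀ hmu']
      calc |sublinE 𝒮 (fun ω => φ (ξ ω + (-mu) • η ω)) -
          ⨆ x, (gInt 𝒮 (fun ω => φ (ξ ω)) x +
            (-mu) * gInt 𝒮 (fun ω => (⟪gradient φ (ξ ω), η ω⟫ : ℝ)) x)|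
          ≤ (K:ℝ) * mu ^ 2 * Mη := h1
        _ = (K:ℝ) * Mη * mu * mu := by ring
    have hsum2 := hD2.add heA
    rw [add_zero] at hsum2
    have hA : Tendsto (fun mu : ℝ =>
        (sublinE 𝒮 (fun ω => φ (ξ ω + (-mu) • η ω)) - sublinE 𝒮 (fun ω => φ (ξ ω))) / (-mu))
        (𝓝[>] 0) (𝓝 (-(⨆ x : {y : ↥𝒮 | gInt 𝒮 (fun ω => φ (ξ ω)) y
          = ⨆ x, gInt 𝒮 (fun ω => φ (ξ ω)) x},
            gInt 𝒮 (fun ω => -(⟪gradient φ (ξ ω), η ω⟫ : ℝ)) ↑x))) := by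
      have hneg := hsum2.neg
      refine Filter.Tendsto.congr' ?_ hneg
      filter_upwards [self_mem_nhdsWithin] with mu hmu
      rw [← add_div, hsub0, div_neg]
      ring
    have hnegt : Tendsto (fun lam : ℝ => -lam) (𝓝[<] (0:ℝ)) (𝓝[>] (0:ℝ)) := by
      apply tendsto_nhdsWithin_of_tendsto_nhds_of_eventually_within
      · have h0 : Tendsto (fun lam : ℝ => -lam) (𝓝 (0:ℝ)) (𝓝 (-(0:ℝ))) :=
          continuous_neg.tendsto 0
        rw [neg_zero] at h0
        exact h0.mono_left nhdsWithin_le_nhds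
      · filter_upwards [self_mem_nhdsWithin] with lam hlam
        have hl : lam < 0 := hlam
        exact Set.mem_Ioi.2 (by linarith)
    have hcomp := hA.comp hnegt
    rw [sublinECond_eq]
    refine Filter.Tendsto.congr' ?_ hcomp
    refine Eventually.of_forall fun lam => ?_
    simp only [Function.comp_apply, neg_neg]
end
end
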